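/- Let P = U M Uᵀ be a real symmetric matrix with orthogonal U and diagonal M, and let H^{(ℓ)} follow the ClenshawGCN linear recurrence H^{(-2)} = H^{(-1)} = 0, H^{(ℓ)} = 2P H^{(ℓ-1)} − H^{(ℓ-2)} + α_ℓ H*. Then H^{(K)} = U · (Σ_{ℓ=0}^{K} α_{K−ℓ} U_ℓ(M)) · Uᵀ · H*, where U_ℓ(M) applies the ℓ-th second-kind Chebyshev polynomial entrywise to the diagonal of M. -/

import Mathlib

/-!
The polynomials `S_m = ∑_{ℓ ≤ m} α_{m-ℓ} U_ℓ` obey the ClenshawGCN recurrence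
`S_m = 2 X S_{m-1} - S_{m-2} + α_m` (from `U_{ℓ+2} = 2 X U_{ℓ+1} - U_ℓ`), so by induction
`H^{(m)} = S_m(P) H*`. Conjugation by the orthogonal `U` is an algebra automorphism, hence
`S_K(U M Uᵀ) = U S_K(M) Uᵀ`, and a polynomial of a diagonal matrix acts entrywise on the diagonal.
-/

open Matrix Polynomial Finset

namespace Polynomial

theorem aeval_mul_mul_eq_of_mul_eq_one {R A : Type*} [CommSemiring R] [Semiring A]
    [Algebra R A] {u v : A} (huv : u * v = 1) (hvu : v * u = 1) (x : A) (p : R[X]) :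
    aeval (u * x * v) p = u * aeval x p * v := by
  let w : Aˣ := ⟨u, v, huv, hvu⟩
  simpa [ConjAct.units_smul_def, w] using aeval_smul p (ConjAct.toConjAct w) x

variable {R : Type*} [CommRing R]

noncomputable def clenshawPoly (α : ℕ → R) (m : ℕ) : R[X] :=
  ∑ ℓ ∈ range (m + 1), α (m - ℓ) • Chebyshev.U R ℓ

variable (α : ℕ → R)

theorem clenshawPoly_zero : clenshawPoly α 0 = C (α 0) := by
  simp [clenshawPoly, Chebyshev.U_zero, smul_eq_C_mul]

theorem clenshawPoly_one : clenshawPoly α 1 = 2 * X * C (α 0) + C (α 1) := by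
  simp [clenshawPoly, sum_range_succ, Chebyshev.U_zero, Chebyshev.U_one, smul_eq_C_mul]
  ring

theorem clenshawPoly_add_two (m : ℕ) :
    clenshawPoly α (m + 2) =
      2 * X * clenshawPoly α (m + 1) - clenshawPoly α m + C (α (m + 2)) := by
  set T := ∑ ℓ ∈ range (m + 1), α (m - ℓ) • Chebyshev.U R ↑(ℓ + 1)
  have hU (ℓ : ℕ) :
      Chebyshev.U R ↑(ℓ + 2) = 2 * X * Chebyshev.U R ↑(ℓ + 1) - Chebyshev.U R ℓ := by
    push_cast
    exact Chebyshev.U_add_two R ℓ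
  have h1 : clenshawPoly α (m + 1) = T + C (α (m + 1)) := by
    rw [clenshawPoly, sum_range_succ']
    simp [Nat.add_sub_add_right, T, Chebyshev.U_zero, smul_eq_C_mul]
  have h2 : clenshawPoly α (m + 2) =
      2 * X * T - clenshawPoly α m + 2 * X * C (α (m + 1)) + C (α (m + 2)) := by
    rw [clenshawPoly, sum_range_succ', sum_range_succ']
    simp only [Nat.add_sub_add_right, hU, smul_sub, sum_sub_distrib, ← mul_smul_comm, ← mul_sum]
    simp [clenshawPoly, T, Chebyshev.U_zero, Chebyshev.U_one, smul_eq_C_mul]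
    ring
  rw [h1, h2]
  ring

end Polynomial

namespace Matrix

theorem aeval_diagonal {R ι : Type*} [CommSemiring R] [Fintype ι] [DecidableEq ι]
    (μ : ι → R) (p : R[X]) :
    aeval (diagonal μ) p = diagonal fun i => p.eval (μ i) := by
  rw [← diagonalAlgHom_apply (R := R), aeval_algHom_apply, aeval_pi_apply]
  simp

variable {R ι κ : Type*} [CommRing R] [Fintype ι] [DecidableEq ι]

theorem eq_aeval_clenshawPoly_mul_of_recurrence (P : Matrix ι ι R) (Hs : Matrix ι κ R)
    (α : ℕ → R) (H : ℤ → Matrix ι κ R) (K : ℕ) (hinit2 : H (-2) = 0) (hinit1 : H (-1) = 0)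
    (hrec : ∀ ℓ : ℕ, ℓ ≤ K →
      H ℓ = (2 : R) • (P * H ((ℓ : ℤ) - 1)) - H ((ℓ : ℤ) - 2) + α ℓ • Hs) :
    ∀ m ≤ K, H m = aeval P (clenshawPoly α m) * Hs := by
  have h0 : H 0 = α 0 • Hs := by
    simpa [hinit1, hinit2] using hrec 0 K.zero_le
  intro m
  induction m using Nat.twoStepInduction with
  | zero =>
    intro _
    rw [Nat.cast_zero, h0, clenshawPoly_zero, aeval_C, Algebra.algebraMap_eq_smul_one,
      Matrix.smul_mul, Matrix.one_mul]
  | one =>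
    intro hK
    have h1 := hrec 1 hK
    simp only [Nat.cast_one, sub_self, h0, show (1 : ℤ) - 2 = -1 by norm_num,
      hinit1, sub_zero] at h1
    rw [Nat.cast_one, h1, clenshawPoly_one]
    simp only [map_add, map_mul, aeval_X, aeval_C, Algebra.algebraMap_eq_smul_one, two_mul,
      Matrix.add_mul, Matrix.smul_mul, Matrix.mul_smul, Matrix.one_mul, Matrix.mul_one]
    module
  | more m ih0 ih1 =>
    intro hK
    have h := hrec (m + 2) hK
    rw [show ((m + 2 : ℕ) : ℤ) - 1 = ↑(m + 1) by push_cast; ring,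
      show ((m + 2 : ℕ) : ℤ) - 2 = m by push_cast; ring, ih1 (by omega), ih0 (by omega)] at h
    rw [h, clenshawPoly_add_two]
    simp only [map_add, map_sub, map_mul, aeval_X, aeval_C, Algebra.algebraMap_eq_smul_one,
      two_mul, Matrix.add_mul, Matrix.sub_mul, Matrix.smul_mul, Matrix.one_mul, Matrix.mul_assoc]
    module

end Matrix

/-- Spectral-filter form of the ClenshawGCN output: if P = U M Uᵀ with U
orthogonal and M = diag(μ), and H^{(ℓ)} follows the linear ClenshawGCN
recurrence, then H^{(K)} = U (Σ_{ℓ=0}^K α_{K-ℓ} U_ℓ(M)) Uᵀ H*, where U_ℓ(M)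
applies the ℓ-th second-kind Chebyshev polynomial to the diagonal of M. -/
theorem clenshawgcn_spectral_form {n d : ℕ} [DecidableEq (Fin n)] (K : ℕ)
    (U : Matrix (Fin n) (Fin n) ℝ) (μ : Fin n → ℝ)
    (hU : U * Uᵀ = 1) (hU' : Uᵀ * U = 1)
    (P : Matrix (Fin n) (Fin n) ℝ) (hP : P = U * Matrix.diagonal μ * Uᵀ)
    (Hs : Matrix (Fin n) (Fin d) ℝ) (α : ℕ → ℝ)
    (H : ℤ → Matrix (Fin n) (Fin d) ℝ)
    (hinit2 : H (-2) = 0) (hinit1 : H (-1) = 0)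
    (hrec : ∀ ℓ : ℕ, ℓ ≤ K →
      H ℓ = (2 : ℝ) • (P * H ((ℓ : ℤ) - 1)) - H ((ℓ : ℤ) - 2) + α ℓ • Hs) :
    H K = U * (∑ ℓ ∈ range (K + 1),
        α (K - ℓ) •
          Matrix.diagonal (fun i => (Polynomial.Chebyshev.U ℝ ℓ).eval (μ i))) *
      Uᵀ * Hs := by
  rw [eq_aeval_clenshawPoly_mul_of_recurrence P Hs α H K hinit2 hinit1 hrec K le_rfl, hP,
    aeval_mul_mul_eq_of_mul_eq_one hU hU']
  simp only [clenshawPoly, map_sum, map_smul, aeval_diagonal]
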